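/- (Two-source perfect codes are Hamming codes) Let (H₁, H₂) be surjective F₂-matrices with n columns such that the syndrome map is a bijection from the 2-terminal Hamming sources of length n onto its codomain. Then after shifting the null space of H₁ into H₂ (yielding an equivalent perfect code (H′₁, H′₂) with null H′₁ = {0} and null H′₂ = null H₁ ⊕ null H₂), H′₂ is an m × n matrix with 2^m = n + 1 whose columns are nonzero and pairwise distinct — i.e., a parity check matrix of the Hamming (n, n−m) code, unique up to column permutation. -/

import Mathlib

/-!
Sources are exactly the pairs at Hamming distance at most 1, so there are 2ⁿ(n + 1) of them and
perfectness gives 2^(m₁ + m₂) = 2ⁿ(n + 1). Since (w, w) and (0, 0) are sources, null H₁ and null H₂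
meet trivially, and rank–nullity applied to null H₂' = null H₁ ⊕ null H₂ gives m₁ + m₂ = n + m,
whence 2^m = n + 1. If a - c = u₁ + u₂ with uᵢ ∈ null Hᵢ and a, c of weight at most 1, then the
sources (a, 0) and (a - u₁, u₂) have the same syndrome, so a = c; taking a = e_j and c = 0 or
c = e_k shows that the columns of H₂' are nonzero and pairwise distinct.
-/

/-- Hamming weight of a binary vector. -/
def wt {n : ℕ} (v : Fin n → ZMod 2) : ℕ := (Finset.univ.filter fun j => v j ≠ 0).card

/-- 2-terminal Hamming sources of length `n`: pairs `(b+v₁, b+v₂)` with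
`wt(v₁) + wt(v₂) ≤ 1`. -/
def hammingPairs (n : ℕ) : Set ((Fin n → ZMod 2) × (Fin n → ZMod 2)) :=
  {p | ∃ b v₁ v₂ : Fin n → ZMod 2, p.1 = b + v₁ ∧ p.2 = b + v₂ ∧ wt v₁ + wt v₂ ≤ 1}

open Function Matrix Module LinearMap

lemma hammingNorm_pi_single_one {ι : Type*} [Fintype ι] [DecidableEq ι] (j : ι) :
    hammingNorm (Pi.single j (1 : ZMod 2) : ι → ZMod 2) = 1 := by
  simp [hammingNorm, Pi.single_apply, Finset.filter_eq']

lemma injective_pi_single_one {ι R : Type*} [DecidableEq ι] [Zero R] [One R] [NeZero (1 : R)] :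
    Injective fun j : ι => (Pi.single j (1 : R) : ι → R) := by
  intro i j h
  by_contra hij
  simpa [Pi.single_eq_of_ne hij] using congrFun h i

lemma setOf_hammingNorm_le_one_eq_range {ι : Type*} [Fintype ι] [DecidableEq ι] :
    {v : ι → ZMod 2 | hammingNorm v ≤ 1} =
      Set.range fun o : Option ι => o.elim 0 fun j => Pi.single j 1 := by
  ext v
  constructor
  · intro hv
    by_cases hv0 : v = 0
    · exact ⟨none, hv0.symm⟩
    obtain ⟨j, hj⟩ := Function.ne_iff.mp hv0
    have hsupp : ∀ i, v i ≠ 0 → i = j := fun i hi =>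
      Finset.card_le_one.mp hv i (by simpa using hi) j (by simpa using hj)
    refine ⟨some j, funext fun i => ?_⟩
    by_cases hij : i = j
    · subst hij
      have : ∀ a : ZMod 2, a ≠ 0 → a = 1 := by decide
      simp [this _ hj]
    · simp [hij, not_imp_comm.mp (hsupp i) hij]
  · rintro ⟨_ | j, rfl⟩
    · simp
    · simp [hammingNorm_pi_single_one]

lemma ncard_setOf_hammingNorm_le_one {ι : Type*} [Fintype ι] [DecidableEq ι] :
    {v : ι → ZMod 2 | hammingNorm v ≤ 1}.ncard = Fintype.card ι + 1 := by
  rw [setOf_hammingNorm_le_one_eq_range, Set.ncard_range_of_injective]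
  · simp
  rintro (_ | i) (_ | j) h
  · rfl
  · simpa using congrFun h j
  · simpa using congrFun h i
  · exact congrArg some (injective_pi_single_one h)

lemma hammingDist_eq_hammingNorm_sub {ι : Type*} {β : ι → Type*} [Fintype ι]
    [∀ i, DecidableEq (β i)] [∀ i, AddCommGroup (β i)] (x y : ∀ i, β i) :
    hammingDist x y = hammingNorm (x - y) := by
  rw [hammingDist_comm, hammingDist_eq_hammingNorm, neg_add_eq_sub]

lemma wt_eq_hammingNorm {n : ℕ} (v : Fin n → ZMod 2) : wt v = hammingNorm v := rfl

lemma hammingPairs_eq (n : ℕ) : hammingPairs n = {p | hammingDist p.1 p.2 ≤ 1} := by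
  ext p
  constructor
  · rintro ⟨b, v₁, v₂, h₁, h₂, hw⟩
    calc hammingDist p.1 p.2 = hammingDist v₁ v₂ := by
          rw [h₁, h₂, hammingDist_eq_hammingNorm_sub, hammingDist_eq_hammingNorm_sub,
            add_sub_add_left_eq_sub]
      _ ≤ hammingDist v₁ 0 + hammingDist 0 v₂ := hammingDist_triangle _ _ _
      _ ≤ 1 := by rwa [hammingDist_zero_right, hammingDist_zero_left, ← wt_eq_hammingNorm,
          ← wt_eq_hammingNorm]
  · intro hp
    refine ⟨p.2, p.1 - p.2, 0, by abel, by simp, ?_⟩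
    rwa [wt_eq_hammingNorm, wt_eq_hammingNorm, hammingNorm_zero, add_zero,
      ← hammingDist_eq_hammingNorm_sub]

lemma ncard_hammingPairs (n : ℕ) : (hammingPairs n).ncard = 2 ^ n * (n + 1) := by
  have hpre : hammingPairs n = (fun p => (p.1 - p.2, p.2)) ⁻¹'
      ({v | hammingNorm v ≤ 1} ×ˢ Set.univ) := by
    ext p
    simp [hammingPairs_eq, hammingDist_eq_hammingNorm_sub]
  rw [hpre, Set.ncard_preimage_of_injective_subset_range, Set.ncard_prod,
    ncard_setOf_hammingNorm_le_one, Set.ncard_univ]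
  · simp [mul_comm]
  · intro p q h
    obtain ⟨h₁, h₂⟩ := Prod.mk.inj h
    exact Prod.ext (by simpa [h₂] using h₁) h₂
  · intro q _
    exact ⟨(q.1 + q.2, q.2), by simp⟩

lemma finrank_ker_mulVecLin_add_card {K ι κ : Type*} [Field K] [Fintype ι] [Fintype κ]
    {H : Matrix κ ι K} (hH : Surjective H.mulVec) :
    finrank K (ker H.mulVecLin) + Fintype.card κ = Fintype.card ι := by
  have hrange : range H.mulVecLin = ⊤ := range_eq_top.mpr hH
  have := finrank_range_add_finrank_ker H.mulVecLin
  rw [hrange, finrank_top, finrank_fintype_fun_eq_card, finrank_fintype_fun_eq_card] at this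
  omega

def IsPerfectCode {n m₁ m₂ : ℕ} (H₁ : Matrix (Fin m₁) (Fin n) (ZMod 2))
    (H₂ : Matrix (Fin m₂) (Fin n) (ZMod 2)) : Prop :=
  Set.BijOn (fun p : (Fin n → ZMod 2) × (Fin n → ZMod 2) => (H₁ *ᵥ p.1, H₂ *ᵥ p.2))
    (hammingPairs n) Set.univ

namespace IsPerfectCode

variable {n m₁ m₂ : ℕ} {H₁ : Matrix (Fin m₁) (Fin n) (ZMod 2)}
  {H₂ : Matrix (Fin m₂) (Fin n) (ZMod 2)}

lemma surjective_left (h : IsPerfectCode H₁ H₂) : Surjective H₁.mulVec := fun s =>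
  let ⟨p, _, hp⟩ := h.surjOn (Set.mem_univ (s, 0))
  ⟨p.1, congrArg Prod.fst hp⟩

lemma surjective_right (h : IsPerfectCode H₁ H₂) : Surjective H₂.mulVec := fun s =>
  let ⟨p, _, hp⟩ := h.surjOn (Set.mem_univ (0, s))
  ⟨p.2, congrArg Prod.snd hp⟩

lemma two_pow_add (h : IsPerfectCode H₁ H₂) : 2 ^ (m₁ + m₂) = 2 ^ n * (n + 1) := by
  rw [← ncard_hammingPairs, ← Nat.card_coe_set_eq, Nat.card_congr (h.equiv _)]
  simp [pow_add]

lemma ker_inf_ker (h : IsPerfectCode H₁ H₂) :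
    ker H₁.mulVecLin ⊓ ker H₂.mulVecLin = ⊥ := by
  refine eq_bot_iff.mpr fun w ⟨hw₁, hw₂⟩ => ?_
  have hdiag : ∀ v : Fin n → ZMod 2, (v, v) ∈ hammingPairs n := fun v => by
    simp [hammingPairs_eq]
  have := h.injOn (hdiag w) (hdiag 0) (by simp_all)
  simpa using congrArg Prod.fst this

lemma eq_of_sub_mem_ker_sup (h : IsPerfectCode H₁ H₂) {a c : Fin n → ZMod 2}
    (ha : hammingNorm a ≤ 1) (hc : hammingNorm c ≤ 1)
    (hac : a - c ∈ ker H₁.mulVecLin ⊔ ker H₂.mulVecLin) : a = c := by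
  obtain ⟨u₁, hu₁, u₂, hu₂, hsum⟩ := Submodule.mem_sup.mp hac
  rw [mem_ker, mulVecLin_apply] at hu₁ hu₂
  have hsrc : (a - u₁, u₂) ∈ hammingPairs n := by
    simpa [hammingPairs_eq, hammingDist_eq_hammingNorm_sub,
      show a - u₁ - u₂ = c by rw [sub_sub, hsum, sub_sub_cancel]] using hc
  have hsrc₀ : (a, 0) ∈ hammingPairs n := by
    simpa [hammingPairs_eq, hammingDist_zero_right] using ha
  obtain ⟨hu₁₀, hu₂₀⟩ := Prod.mk.inj <| h.injOn hsrc₀ hsrc <| by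
    simp [mulVec_sub, hu₁, hu₂]
  rw [← sub_eq_zero, ← hsum, ← hu₂₀, add_zero]
  exact sub_eq_self.mp hu₁₀.symm

variable {m : ℕ} {H : Matrix (Fin m) (Fin n) (ZMod 2)}

lemma add_eq_of_ker_eq_sup (h : IsPerfectCode H₁ H₂) (hH : Surjective H.mulVec)
    (hker : ker H.mulVecLin = ker H₁.mulVecLin ⊔ ker H₂.mulVecLin) : m₁ + m₂ = n + m := by
  have hsup := Submodule.finrank_sup_add_finrank_inf_eq (ker H₁.mulVecLin) (ker H₂.mulVecLin)
  rw [h.ker_inf_ker, finrank_bot, ← hker] at hsup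
  have h₁ := finrank_ker_mulVecLin_add_card h.surjective_left
  have h₂ := finrank_ker_mulVecLin_add_card h.surjective_right
  have h₀ := finrank_ker_mulVecLin_add_card hH
  simp only [Fintype.card_fin] at h₁ h₂ h₀
  omega

lemma col_ne_zero_of_ker_eq_sup (h : IsPerfectCode H₁ H₂)
    (hker : ker H.mulVecLin = ker H₁.mulVecLin ⊔ ker H₂.mulVecLin) (j : Fin n) :
    (fun r => H r j) ≠ 0 := by
  intro hcol
  have hmem : Pi.single j 1 - 0 ∈ ker H₁.mulVecLin ⊔ ker H₂.mulVecLin := by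
    rwa [← hker, mem_ker, mulVecLin_apply, sub_zero, mulVec_single_one]
  have := h.eq_of_sub_mem_ker_sup (hammingNorm_pi_single_one j).le (by simp) hmem
  simpa using congrFun this j

lemma injective_col_of_ker_eq_sup (h : IsPerfectCode H₁ H₂)
    (hker : ker H.mulVecLin = ker H₁.mulVecLin ⊔ ker H₂.mulVecLin) :
    Injective fun j r => H r j := by
  intro j k hjk
  have hmem : Pi.single j 1 - Pi.single k 1 ∈ ker H₁.mulVecLin ⊔ ker H₂.mulVecLin := by
    rwa [← hker, mem_ker, mulVecLin_apply, mulVec_sub, mulVec_single_one, mulVec_single_one,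
      sub_eq_zero]
  exact injective_pi_single_one <| h.eq_of_sub_mem_ker_sup (hammingNorm_pi_single_one j).le
    (hammingNorm_pi_single_one k).le hmem

end IsPerfectCode

theorem stmt_16_general (n m₁ m₂ : ℕ)
    (H₁ : Matrix (Fin m₁) (Fin n) (ZMod 2)) (H₂ : Matrix (Fin m₂) (Fin n) (ZMod 2))
    (hperf : Set.BijOn
      (fun p : (Fin n → ZMod 2) × (Fin n → ZMod 2) => (H₁.mulVec p.1, H₂.mulVec p.2))
      (hammingPairs n) Set.univ)
    (m : ℕ) (H₂' : Matrix (Fin m) (Fin n) (ZMod 2))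
    (hker : LinearMap.ker H₂'.mulVecLin =
      LinearMap.ker H₁.mulVecLin ⊔ LinearMap.ker H₂.mulVecLin)
    (hsurj : Function.Surjective H₂'.mulVec) :
    2 ^ m = n + 1 ∧ (∀ j, (fun r => H₂' r j) ≠ 0) ∧
      Function.Injective (fun j => fun r => H₂' r j) := by
  have hcode : IsPerfectCode H₁ H₂ := hperf
  refine ⟨?_, hcode.col_ne_zero_of_ker_eq_sup hker, hcode.injective_col_of_ker_eq_sup hker⟩
  have hcount := hcode.two_pow_add
  rw [hcode.add_eq_of_ker_eq_sup hsurj hker, pow_add] at hcount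
  exact Nat.eq_of_mul_eq_mul_left (by positivity) hcount

/-- (Two-source perfect codes are Hamming codes) Let `(H₁, H₂)` be surjective
`F₂`-matrices with `n` columns whose syndrome map is a bijection from the 2-terminal
Hamming sources of length `n` onto its codomain.  Then any surjective `m × n` matrix
`H₂'` with `null H₂' = null H₁ ⊔ null H₂` (the shifted second coding matrix) satisfies
`2^m = n + 1` and has nonzero, pairwise distinct columns — i.e., it is a parity check
matrix of the Hamming `(n, n−m)` code, unique up to column permutation. -/
theorem stmt_16 (n m₁ m₂ : ℕ)
    (H₁ : Matrix (Fin m₁) (Fin n) (ZMod 2)) (H₂ : Matrix (Fin m₂) (Fin n) (ZMod 2))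
    (hs₁ : Function.Surjective H₁.mulVec) (hs₂ : Function.Surjective H₂.mulVec)
    (hperf : Set.BijOn
      (fun p : (Fin n → ZMod 2) × (Fin n → ZMod 2) => (H₁.mulVec p.1, H₂.mulVec p.2))
      (hammingPairs n) Set.univ)
    (m : ℕ) (H₂' : Matrix (Fin m) (Fin n) (ZMod 2))
    (hker : LinearMap.ker H₂'.mulVecLin =
      LinearMap.ker H₁.mulVecLin ⊔ LinearMap.ker H₂.mulVecLin)
    (hsurj : Function.Surjective H₂'.mulVec) :
    2 ^ m = n + 1 ∧ (∀ j, (fun r => H₂' r j) ≠ 0) ∧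
      Function.Injective (fun j => fun r => H₂' r j) :=
  stmt_16_general n m₁ m₂ H₁ H₂ hperf m H₂' hker hsurj
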